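/- arXiv:0907.0871 — 3 statements merged into one kernel-verified Lean document; each statement's English description precedes it below -/
import Mathlib

section
/- Let V > 0 and c > 0, and let H : [0, T) → R be a differentiable function satisfying H'(t) + H(t)²/V ≤ −c for all t ∈ [0, T). Then T ≤ √(V/c) · ( arctan( H(0) / √(V c) ) + π/2 ); in particular T ≤ π √(V/c), and there exists no such differentiable function defined on all of [0, ∞). -/
/-!
Put `a = √(V c)`. Along a solution, `arctan (H t / a) + (c / a) t` has derivative
`(a H' + c (a² + H²) / a) / (a² + H²)`, which the Riccati inequality makes nonpositive, so this
quantity is antitone. Since `arctan` is bounded below by `-π/2`, this caps `(c / a) t` by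
`arctan (H 0 / a) + π / 2` for every time `t` at which the solution exists.
-/

open Real Set

theorem arctan_riccati_deriv_le {V c h d : ℝ} (hV : 0 < V) (hc : 0 < c)
    (hineq : d + h ^ 2 / V ≤ -c) :
    1 / (1 + (h / √(V * c)) ^ 2) * (d / √(V * c)) ≤ -(c / √(V * c)) := by
  set a := √(V * c)
  have ha : 0 < a := by positivity
  have ha2 : a ^ 2 = V * c := sq_sqrt (by positivity)
  rw [div_mul_div_comm, one_mul, div_le_iff₀ (by positivity)]
  calc d ≤ -c - h ^ 2 / V := by linarith
    _ = -(c / a) * ((1 + (h / a) ^ 2) * a) := by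
      field_simp
      rw [ha2]
      ring

theorem antitoneOn_arctan_add_of_riccati {V c : ℝ} (hV : 0 < V) (hc : 0 < c) {H : ℝ → ℝ}
    {s : Set ℝ} (hs : Convex ℝ s) (hdiff : ∀ t ∈ s, DifferentiableAt ℝ H t)
    (hineq : ∀ t ∈ s, deriv H t + H t ^ 2 / V ≤ -c) :
    AntitoneOn (fun t => arctan (H t / √(V * c)) + c / √(V * c) * t) s := by
  have hderiv : ∀ t ∈ s, HasDerivAt (fun t => arctan (H t / √(V * c)) + c / √(V * c) * t)
      (1 / (1 + (H t / √(V * c)) ^ 2) * (deriv H t / √(V * c)) + c / √(V * c)) t :=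
    fun t ht => ((hdiff t ht).hasDerivAt.div_const _).arctan.add
      (((hasDerivAt_id t).const_mul _).congr_deriv (mul_one _))
  apply antitoneOn_of_deriv_nonpos hs
  · exact fun t ht => (hderiv t ht).continuousAt.continuousWithinAt
  · exact fun t ht => (hderiv t (interior_subset ht)).differentiableAt.differentiableWithinAt
  · intro t ht
    rw [(hderiv t (interior_subset ht)).deriv]
    linarith [arctan_riccati_deriv_le hV hc (hineq t (interior_subset ht))]

theorem mul_lt_arctan_add_pi_div_two_of_riccati {V c T t : ℝ} (hV : 0 < V) (hc : 0 < c)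
    {H : ℝ → ℝ} (hdiff : ∀ t ∈ Ico 0 T, DifferentiableAt ℝ H t)
    (hineq : ∀ t ∈ Ico 0 T, deriv H t + H t ^ 2 / V ≤ -c) (ht : t ∈ Ico 0 T) :
    c / √(V * c) * t < arctan (H 0 / √(V * c)) + π / 2 := by
  have hmono := antitoneOn_arctan_add_of_riccati hV hc (convex_Ico 0 T) hdiff hineq
    (left_mem_Ico.2 (ht.1.trans_lt ht.2)) ht ht.1
  simp only [mul_zero, add_zero] at hmono
  linarith [neg_pi_div_two_lt_arctan (H t / √(V * c))]

theorem sqrt_div_eq_sqrt_mul_div {V c : ℝ} (hc : 0 < c) : √(V / c) = √(V * c) / c := by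
  rw [eq_div_iff hc.ne', ← sqrt_sq hc.le, ← sqrt_mul' _ (sq_nonneg c), sqrt_sq hc.le]
  congr 1
  field_simp

theorem le_sqrt_div_mul_arctan_add_pi_div_two_of_riccati {V c T : ℝ} (hV : 0 < V) (hc : 0 < c)
    {H : ℝ → ℝ} (hdiff : ∀ t ∈ Ico 0 T, DifferentiableAt ℝ H t)
    (hineq : ∀ t ∈ Ico 0 T, deriv H t + H t ^ 2 / V ≤ -c) :
    T ≤ √(V / c) * (arctan (H 0 / √(V * c)) + π / 2) := by
  have ha : 0 < √(V * c) := by positivity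
  have hangle : 0 < arctan (H 0 / √(V * c)) + π / 2 := by
    linarith [neg_pi_div_two_lt_arctan (H 0 / √(V * c))]
  refine le_of_forall_lt fun t htT => ?_
  rcases lt_or_ge t 0 with ht0 | ht0
  · have : 0 < √(V / c) := by positivity
    linarith [mul_pos this hangle]
  · have hlt := mul_lt_arctan_add_pi_div_two_of_riccati hV hc hdiff hineq ⟨ht0, htT⟩
    rw [div_mul_eq_mul_div, div_lt_iff₀ ha] at hlt
    rw [sqrt_div_eq_sqrt_mul_div hc, div_mul_eq_mul_div, lt_div_iff₀ hc]
    linarith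

/-- Let `V > 0`, `c > 0`, and let `H : [0,T) → ℝ` be differentiable with
`H'(t) + H(t)²/V ≤ −c` on `[0,T)`. Then `T ≤ √(V/c) (arctan(H(0)/√(Vc)) + π/2)`;
in particular `T ≤ π √(V/c)`, and no such differentiable function exists on all of
`[0,∞)`. -/
theorem riccati_inequality_blowup_time
    (V c T : ℝ) (hV : 0 < V) (hc : 0 < c) (H : ℝ → ℝ)
    (hdiff : ∀ t ∈ Ico (0 : ℝ) T, DifferentiableAt ℝ H t)
    (hineq : ∀ t ∈ Ico (0 : ℝ) T, deriv H t + (H t) ^ 2 / V ≤ -c) :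
    T ≤ Real.sqrt (V / c) * (Real.arctan (H 0 / Real.sqrt (V * c)) + π / 2) ∧
    T ≤ π * Real.sqrt (V / c) ∧
    ¬∃ G : ℝ → ℝ, ∀ t ∈ Ici (0 : ℝ),
      DifferentiableAt ℝ G t ∧ deriv G t + (G t) ^ 2 / V ≤ -c := by
  have hT := le_sqrt_div_mul_arctan_add_pi_div_two_of_riccati hV hc hdiff hineq
  refine ⟨hT, hT.trans ?_, ?_⟩
  · rw [mul_comm π]
    gcongr
    linarith [arctan_lt_pi_div_two (H 0 / √(V * c))]
  · rintro ⟨G, hG⟩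
    have := le_sqrt_div_mul_arctan_add_pi_div_two_of_riccati hV hc
      (T := √(V / c) * (arctan (G 0 / √(V * c)) + π / 2) + 1)
      (fun t ht => (hG t ht.1).1) (fun t ht => (hG t ht.1).2)
    linarith
end

section
/- Let V > 0 and c > 0, set θ₀ = arctan( H(0) / √(V c) ), and let H : [0, T) → R be a differentiable function satisfying H'(t) + H(t)²/V ≤ −c for all t ∈ [0, T). Then for every t ∈ [0, T) with √(c/V) t − θ₀ < π/2, one has H(t) ≤ −√(V c) · tan( √(c/V) t − θ₀ ). -/
/-!
Writing `u = H / √(V c)` and `k = √(c / V)`, the differential inequality becomes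
`u' ≤ -k (1 + u²)`, i.e. `(arctan u)' ≤ -k`. Hence `arctan u(t) + k t` is nonincreasing, so
`arctan u(t) ≤ θ₀ - k t`, and applying the increasing function `tan` on `(-π/2, π/2)` gives the
bound.
-/

open Real Set

theorem antitoneOn_arctan_add_mul {D : Set ℝ} (hD : Convex ℝ D) {u u' : ℝ → ℝ} (k : ℝ)
    (hu : ∀ x ∈ D, HasDerivAt u (u' x) x) (hle : ∀ x ∈ D, u' x ≤ -k * (1 + u x ^ 2)) :
    AntitoneOn (fun x => arctan (u x) + k * x) D := by
  have hderiv : ∀ x ∈ D,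
      HasDerivAt (fun x => arctan (u x) + k * x) (1 / (1 + u x ^ 2) * u' x + k) x := fun x hx =>
    (hu x hx).arctan.add (by simpa using (hasDerivAt_id x).const_mul k)
  refine antitoneOn_of_hasDerivWithinAt_nonpos hD
    (fun x hx => (hderiv x hx).continuousAt.continuousWithinAt)
    (fun x hx => (hderiv x (interior_subset hx)).hasDerivWithinAt) fun x hx => ?_
  have hpos : 0 < 1 + u x ^ 2 := by positivity
  calc 1 / (1 + u x ^ 2) * u' x + k
      ≤ 1 / (1 + u x ^ 2) * (-k * (1 + u x ^ 2)) + k := by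
        gcongr
        exact hle x (interior_subset hx)
    _ = 0 := by field_simp; ring

theorem le_tan_of_arctan_le {x θ : ℝ} (hθ₁ : -(π / 2) < θ) (hθ₂ : θ < π / 2)
    (h : arctan x ≤ θ) : x ≤ tan θ := by
  rwa [← arctan_tan hθ₁ hθ₂, arctan_le_arctan_iff] at h

theorem div_sqrt_le_of_add_sq_div_le {V c h h' : ℝ} (hV : 0 < V) (hc : 0 < c)
    (hle : h' + h ^ 2 / V ≤ -c) :
    h' / √(V * c) ≤ -√(c / V) * (1 + (h / √(V * c)) ^ 2) := by
  have hs : 0 < √(V * c) := by positivity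
  have hsk : √(V * c) * √(c / V) = c := by
    rw [← sqrt_mul (by positivity), show V * c * (c / V) = c ^ 2 by field_simp, sqrt_sq hc.le]
  rw [div_pow, sq_sqrt (by positivity), div_le_iff₀ hs]
  calc h' ≤ -c - h ^ 2 / V := by linarith
    _ = -(√(V * c) * √(c / V)) * (1 + h ^ 2 / (V * c)) := by rw [hsk]; field_simp; ring
    _ = -√(c / V) * (1 + h ^ 2 / (V * c)) * √(V * c) := by ring

/-- Let `V > 0`, `c > 0`, `θ₀ = arctan(H(0)/√(Vc))`, and let
`H : [0,T) → ℝ` be differentiable with `H'(t) + H(t)²/V ≤ −c` on `[0,T)`. Then for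
every `t ∈ [0,T)` with `√(c/V) t − θ₀ < π/2`, one has
`H(t) ≤ −√(Vc) · tan(√(c/V) t − θ₀)`. -/
theorem riccati_inequality_comparison
    (V c T : ℝ) (hV : 0 < V) (hc : 0 < c) (H : ℝ → ℝ)
    (hdiff : ∀ t ∈ Ico (0 : ℝ) T, DifferentiableAt ℝ H t)
    (hineq : ∀ t ∈ Ico (0 : ℝ) T, deriv H t + (H t) ^ 2 / V ≤ -c) :
    ∀ t ∈ Ico (0 : ℝ) T,
      Real.sqrt (c / V) * t - Real.arctan (H 0 / Real.sqrt (V * c)) < π / 2 →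
      H t ≤ -Real.sqrt (V * c) *
        Real.tan (Real.sqrt (c / V) * t - Real.arctan (H 0 / Real.sqrt (V * c))) := by
  intro t ht hlt
  set s := √(V * c)
  set k := √(c / V)
  have hs : 0 < s := by positivity
  have hanti : AntitoneOn (fun x => arctan (H x / s) + k * x) (Ico 0 T) :=
    antitoneOn_arctan_add_mul (convex_Ico 0 T) k
      (fun x hx => (hdiff x hx).hasDerivAt.div_const s)
      (fun x hx => div_sqrt_le_of_add_sq_div_le hV hc (hineq x hx))
  have harctan := hanti ⟨le_rfl, ht.1.trans_lt ht.2⟩ ht ht.1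
  have hkt : 0 ≤ k * t := mul_nonneg (sqrt_nonneg _) ht.1
  have htan := le_tan_of_arctan_le (x := H t / s) (θ := -(k * t - arctan (H 0 / s)))
    (by linarith) (by linarith [arctan_lt_pi_div_two (H 0 / s)]) (by simp only [mul_zero, add_zero] at harctan; linarith)
  rw [tan_neg, div_le_iff₀ hs] at htan
  linarith
end

section
/- Let N > 0 and let H : [0, T) → R be a differentiable function satisfying H'(t) ≤ −H(t)²/N for all t ∈ [0, T), with H(0) < 0. Then for every t ∈ [0, T) one has N + H(0) t > 0 and H(t) ≤ N H(0) / ( N + H(0) t ); consequently T ≤ −N/H(0), and no such differentiable function exists on all of [0, ∞). -/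
open Real Set

/-!
Since `H' ≤ -H²/N ≤ 0`, `H` decreases and so stays negative. Then `1/H` is differentiable with
`(1/H)' = -H'/H² ≥ 1/N`, so `1/H(t) - t/N` is nondecreasing, i.e. `1/H(0) + t/N ≤ 1/H(t) < 0`.
Clearing denominators gives `N + H(0) t > 0` and the bound on `H(t)`; evaluating the positivity at
`t = -N/H(0)` shows this time cannot lie in `[0, T)`.
-/

section DerivBound

variable {N a b : ℝ} {H : ℝ → ℝ}

theorem antitoneOn_Ico_of_deriv_le_neg_sq_div (hN : 0 ≤ N)
    (hdiff : ∀ t ∈ Ico a b, DifferentiableAt ℝ H t)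
    (hineq : ∀ t ∈ Ico a b, deriv H t ≤ -(H t) ^ 2 / N) :
    AntitoneOn H (Ico a b) := by
  refine antitoneOn_of_deriv_nonpos (convex_Ico a b)
    (fun t ht => (hdiff t ht).continuousAt.continuousWithinAt) ?_ ?_ <;> rw [interior_Ico]
  · exact fun t ht => (hdiff t (Ioo_subset_Ico_self ht)).differentiableWithinAt
  · intro t ht
    have hsq : -(H t) ^ 2 / N ≤ 0 := div_nonpos_of_nonpos_of_nonneg (by nlinarith) hN
    exact (hineq t (Ioo_subset_Ico_self ht)).trans hsq

theorem monotoneOn_Ico_inv_sub_div_of_deriv_le_neg_sq_div (hN : 0 < N)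
    (hdiff : ∀ t ∈ Ico a b, DifferentiableAt ℝ H t)
    (hineq : ∀ t ∈ Ico a b, deriv H t ≤ -(H t) ^ 2 / N)
    (hne : ∀ t ∈ Ico a b, H t ≠ 0) :
    MonotoneOn (fun s => (H s)⁻¹ - s / N) (Ico a b) := by
  have hderiv : ∀ t ∈ Ico a b, HasDerivAt (fun s => (H s)⁻¹ - s / N)
      (-deriv H t / H t ^ 2 - 1 / N) t := fun t ht =>
    ((hdiff t ht).hasDerivAt.inv (hne t ht)).sub (by simpa using (hasDerivAt_id t).div_const N)
  refine monotoneOn_of_deriv_nonneg (convex_Ico a b)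
    (fun t ht => (hderiv t ht).continuousAt.continuousWithinAt) ?_ ?_ <;> rw [interior_Ico]
  · exact fun t ht => (hderiv t (Ioo_subset_Ico_self ht)).differentiableAt.differentiableWithinAt
  · intro t ht
    have ht' := Ioo_subset_Ico_self ht
    have hsq : 0 < H t ^ 2 := by have := hne t ht'; positivity
    have hmul : deriv H t * N ≤ -H t ^ 2 := (le_div_iff₀ hN).mp (hineq t ht')
    rw [(hderiv t ht').deriv, sub_nonneg, div_le_div_iff₀ hN hsq]
    linarith

end DerivBound

theorem pos_and_le_div_of_inv_add_div_le {N h₀ h t : ℝ} (hN : 0 < N) (hh₀ : h₀ < 0) (hh : h < 0)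
    (hle : h₀⁻¹ + t / N ≤ h⁻¹) :
    0 < N + h₀ * t ∧ h ≤ N * h₀ / (N + h₀ * t) := by
  have hNh₀ : N * h₀ < 0 := mul_neg_of_pos_of_neg hN hh₀
  have hsum : h₀⁻¹ + t / N = (N + h₀ * t) / (N * h₀) := by
    field_simp [hN.ne', hh₀.ne]
  have hmul : (N + h₀ * t) * h ≤ N * h₀ := by
    rw [hsum, div_le_iff_of_neg hNh₀, ← div_eq_inv_mul, div_le_iff_of_neg hh] at hle
    exact hle
  have hpos : 0 < N + h₀ * t := by
    by_contra! hnonpos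
    nlinarith
  exact ⟨hpos, (le_div_iff₀ hpos).mpr (by linarith)⟩

section Riccati

variable {N T : ℝ} {H : ℝ → ℝ}

theorem riccati_upper_bound (hN : 0 < N)
    (hdiff : ∀ t ∈ Ico (0 : ℝ) T, DifferentiableAt ℝ H t)
    (hineq : ∀ t ∈ Ico (0 : ℝ) T, deriv H t ≤ -(H t) ^ 2 / N)
    (hH0 : H 0 < 0) :
    ∀ t ∈ Ico (0 : ℝ) T, 0 < N + H 0 * t ∧ H t ≤ N * H 0 / (N + H 0 * t) := by
  intro t ht
  have h0 : (0 : ℝ) ∈ Ico 0 T := ⟨le_rfl, ht.1.trans_lt ht.2⟩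
  have hneg : ∀ s ∈ Ico (0 : ℝ) T, H s < 0 := fun s hs =>
    (antitoneOn_Ico_of_deriv_le_neg_sq_div hN.le hdiff hineq h0 hs hs.1).trans_lt hH0
  have hmono := monotoneOn_Ico_inv_sub_div_of_deriv_le_neg_sq_div hN hdiff hineq
    (fun s hs => (hneg s hs).ne) h0 ht ht.1
  refine pos_and_le_div_of_inv_add_div_le hN hH0 (hneg t ht) ?_
  simp only [zero_div, sub_zero] at hmono
  linarith

theorem riccati_lifespan_le (hN : 0 < N)
    (hdiff : ∀ t ∈ Ico (0 : ℝ) T, DifferentiableAt ℝ H t)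
    (hineq : ∀ t ∈ Ico (0 : ℝ) T, deriv H t ≤ -(H t) ^ 2 / N)
    (hH0 : H 0 < 0) : T ≤ -N / H 0 := by
  by_contra! hlt
  have hmem : -N / H 0 ∈ Ico (0 : ℝ) T := ⟨(div_pos_of_neg_of_neg (by linarith) hH0).le, hlt⟩
  have hpos := (riccati_upper_bound hN hdiff hineq hH0 _ hmem).1
  rw [mul_div_cancel₀ _ hH0.ne] at hpos
  linarith

end Riccati

/-- Let `N > 0` and let `H : [0,T) → ℝ` be differentiable with
`H'(t) ≤ −H(t)²/N` on `[0,T)` and `H(0) < 0`. Then for every `t ∈ [0,T)` one has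
`N + H(0) t > 0` and `H(t) ≤ N H(0)/(N + H(0) t)`; consequently `T ≤ −N/H(0)`,
and no such differentiable function exists on all of `[0,∞)`. -/
theorem riccati_inequality_negative_initial_blowup
    (N T : ℝ) (hN : 0 < N) (H : ℝ → ℝ)
    (hdiff : ∀ t ∈ Ico (0 : ℝ) T, DifferentiableAt ℝ H t)
    (hineq : ∀ t ∈ Ico (0 : ℝ) T, deriv H t ≤ -(H t) ^ 2 / N)
    (hH0 : H 0 < 0) :
    (∀ t ∈ Ico (0 : ℝ) T, 0 < N + H 0 * t ∧ H t ≤ N * H 0 / (N + H 0 * t)) ∧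
    T ≤ -N / H 0 ∧
    ¬∃ G : ℝ → ℝ, G 0 < 0 ∧ ∀ t ∈ Ici (0 : ℝ),
      DifferentiableAt ℝ G t ∧ deriv G t ≤ -(G t) ^ 2 / N := by
  refine ⟨riccati_upper_bound hN hdiff hineq hH0, riccati_lifespan_le hN hdiff hineq hH0, ?_⟩
  rintro ⟨G, hG0, hG⟩
  have hT := riccati_lifespan_le (T := -N / G 0 + 1) hN
    (fun t ht => (hG t ht.1).1) (fun t ht => (hG t ht.1).2) hG0
  linarith
end
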